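/- For any connected graph G, edim(G ⊙ K_1) ≥ edim(G), where G ⊙ K_1 is the corona of G with the one-vertex graph (i.e., attaching a pendant vertex to every vertex of G). -/

import Mathlib

open SimpleGraph

variable {V W : Type*}

/-- Distance (in `ℕ∞`) from a vertex to an edge: the minimum of the distances
to the two endpoints. -/
noncomputable def edgeDist (G : SimpleGraph V) (v : V) (e : Sym2 V) : ℕ∞ :=
  Sym2.lift ⟨fun a b => min (G.edist v a) (G.edist v b),
    fun a b => min_comm _ _⟩ e

/-- A set of vertices is an edge metric generator if every pair of distinct
edges is distinguished by some vertex of the set. -/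
def IsEdgeMetricGenerator (G : SimpleGraph V) (S : Set V) : Prop :=
  ∀ e₁ ∈ G.edgeSet, ∀ e₂ ∈ G.edgeSet, e₁ ≠ e₂ →
    ∃ w ∈ S, edgeDist G w e₁ ≠ edgeDist G w e₂

/-- The edge metric dimension: minimum cardinality of an edge metric generator. -/
noncomputable def edim (G : SimpleGraph V) : ℕ :=
  sInf {n | ∃ S : Set V, S.ncard = n ∧ IsEdgeMetricGenerator G S}


/-- The join of two graphs: disjoint union plus all edges across. -/
def joinGraph (G : SimpleGraph V) (H : SimpleGraph W) : SimpleGraph (V ⊕ W) where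
  Adj x y := match x, y with
    | .inl a, .inl b => G.Adj a b
    | .inr a, .inr b => H.Adj a b
    | .inl _, .inr _ => True
    | .inr _, .inl _ => True
  symm := by constructor; rintro (a | a) (b | b) h <;> simp_all [SimpleGraph.adj_comm]
  loopless := by
    constructor
    rintro (a | a) h
    · exact G.loopless.irrefl a h
    · exact H.loopless.irrefl a h

/-- A total dominating set: every vertex has a neighbor in the set. -/
def IsTotalDomSet (G : SimpleGraph V) (D : Set V) : Prop :=
  ∀ v : V, ∃ d ∈ D, G.Adj v d

/-- The total domination number. -/
noncomputable def totalDomNum (G : SimpleGraph V) : ℕ :=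
  sInf {n | ∃ D : Set V, D.ncard = n ∧ IsTotalDomSet G D}

/-- The class 𝒢: for every vertex `u` there is a neighbor `v`
such that `{u, v}` is a minimum total dominating set. -/
def InClassG (G : SimpleGraph V) : Prop :=
  ∀ u : V, ∃ v : V, G.Adj u v ∧ IsTotalDomSet G {u, v} ∧
    ({u, v} : Set V).ncard = totalDomNum G

/-- Lexicographic product `G[H]`. -/
def lexProd (G : SimpleGraph V) (H : SimpleGraph W) : SimpleGraph (V × W) where
  Adj x y := G.Adj x.1 y.1 ∨ (x.1 = y.1 ∧ H.Adj x.2 y.2)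
  symm := by constructor; rintro ⟨g, h⟩ ⟨g', h'⟩ (hadj | ⟨rfl, hadj⟩)
             · exact Or.inl hadj.symm
             · exact Or.inr ⟨rfl, hadj.symm⟩
  loopless := by constructor; rintro ⟨g, h⟩ (hadj | ⟨-, hadj⟩)
                 · exact G.loopless.irrefl g hadj
                 · exact H.loopless.irrefl h hadj

/-- Corona product `G ⊙ H`: vertex `(g, none)` is the vertex `g` of `G`, and
`(g, some h)` is the vertex `h` of the copy of `H` attached to `g`. -/
def corona (G : SimpleGraph V) (H : SimpleGraph W) : SimpleGraph (V × Option W) where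
  Adj x y := match x, y with
    | (g, none), (g', none) => G.Adj g g'
    | (g, none), (g', some _) => g = g'
    | (g, some _), (g', none) => g = g'
    | (g, some h), (g', some h') => g = g' ∧ H.Adj h h'
  symm := by constructor; rintro ⟨g, (_ | h)⟩ ⟨g', (_ | h')⟩ hadj <;>
             simp_all [SimpleGraph.adj_comm, eq_comm]
  loopless := by constructor; rintro ⟨g, (_ | h)⟩ hadj <;> simp_all

/-- The closed neighborhood of a vertex. -/
def closedNbhd (G : SimpleGraph V) (u : V) : Set V :=
  insert u (G.neighborSet u)

/-- `u` and `v` are false twins: equal open neighborhoods. -/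
def FalseTwin (G : SimpleGraph V) (u v : V) : Prop :=
  G.neighborSet u = G.neighborSet v

/-- `u` and `v` are true twins: equal closed neighborhoods. -/
def TrueTwin (G : SimpleGraph V) (u v : V) : Prop :=
  closedNbhd G u = closedNbhd G v

/-- The union of the closed neighborhoods of the two endpoints of an edge. -/
def edgeNbhd (G : SimpleGraph V) : Sym2 V → Set V :=
  Sym2.lift ⟨fun a b => closedNbhd G a ∪ closedNbhd G b, fun _ _ => Set.union_comm _ _⟩

/-- Two edges are twin edges: `N[u] ∪ N[v] = N[x] ∪ N[y]`. -/
def TwinEdges (G : SimpleGraph V) (e f : Sym2 V) : Prop :=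
  edgeNbhd G e = edgeNbhd G f

/-- The set of edges lying in nontrivial edge-twin classes. -/
def nontrivTwinEdges (G : SimpleGraph V) : Set (Sym2 V) :=
  {e ∈ G.edgeSet | ∃ f ∈ G.edgeSet, f ≠ e ∧ TwinEdges G e f}

/-- `q(G)`: the number of edges lying in nontrivial edge-twin classes. -/
noncomputable def qval (G : SimpleGraph V) : ℕ := (nontrivTwinEdges G).ncard

/-- `q'(G) = q(G) - m`, where `m` is the number of nontrivial edge-twin classes. -/
noncomputable def q'val (G : SimpleGraph V) : ℕ :=
  qval G - (edgeNbhd G '' nontrivTwinEdges G).ncard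

/-- The set of vertices lying in nontrivial false-twin classes. -/
def nontrivFalseTwins (G : SimpleGraph V) : Set V :=
  {v | ∃ u, u ≠ v ∧ FalseTwin G u v}

/-- The set of vertices lying in nontrivial true-twin classes. -/
def nontrivTrueTwins (G : SimpleGraph V) : Set V :=
  {v | ∃ u, u ≠ v ∧ TrueTwin G u v}

/-- `f'(G) = f(G) - k`: vertices in nontrivial false-twin classes minus the
number of such classes. -/
noncomputable def f'val (G : SimpleGraph V) : ℕ :=
  (nontrivFalseTwins G).ncard - (G.neighborSet '' nontrivFalseTwins G).ncard

/-- `t'(G) = t(G) - ℓ`: vertices in nontrivial true-twin classes minus the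
number of such classes. -/
noncomputable def t'val (G : SimpleGraph V) : ℕ :=
  (nontrivTrueTwins G).ncard - (closedNbhd G '' nontrivTrueTwins G).ncard

/-- A set of representatives for the twin deletion operation: it contains
exactly one vertex from each (false- or true-) twin equivalence class. -/
def IsTwinDeletionSet (G : SimpleGraph V) (R : Set V) : Prop :=
  ∀ v : V, ∃! r : V, r ∈ R ∧ (FalseTwin G v r ∨ TrueTwin G v r)


/-!
Distances in `G ⊙ H` between vertices of the base copy of `G` are those of `G`, and a pendant
vertex attached at `g` sees every base edge exactly one step farther than `g` does. So if a
vertex of the corona separates two base edges, its projection to `G` separates them in `G`,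
and projecting a minimum edge metric generator of `G ⊙ K₁` gives one of `G` that is no larger.
-/

lemma edgeDist_eq_zero_iff (G : SimpleGraph V) {x : V} {e : Sym2 V} :
    edgeDist G x e = 0 ↔ x ∈ e := by
  induction e with
  | _ a b => simp only [edgeDist, Sym2.lift_mk, min_eq_zero, edist_eq_zero_iff, Sym2.mem_iff]

lemma isEdgeMetricGenerator_univ (G : SimpleGraph V) : IsEdgeMetricGenerator G Set.univ := by
  intro e₁ _ e₂ _ hne
  by_contra! hdist
  exact hne <| Sym2.ext fun x => by
    rw [← edgeDist_eq_zero_iff G, ← edgeDist_eq_zero_iff G, hdist x (Set.mem_univ x)]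

lemma exists_isEdgeMetricGenerator_ncard_eq_edim (G : SimpleGraph V) :
    ∃ S : Set V, S.ncard = edim G ∧ IsEdgeMetricGenerator G S :=
  Nat.sInf_mem (s := {n | ∃ S : Set V, S.ncard = n ∧ IsEdgeMetricGenerator G S})
    ⟨_, Set.univ, rfl, isEdgeMetricGenerator_univ G⟩

lemma IsEdgeMetricGenerator.edim_le_ncard {G : SimpleGraph V} {S : Set V}
    (hS : IsEdgeMetricGenerator G S) : edim G ≤ S.ncard :=
  Nat.sInf_le ⟨S, rfl, hS⟩

section Corona

variable (G : SimpleGraph V) (H : SimpleGraph W)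

def coronaBaseEmbedding : G ↪g corona G H where
  toFun g := (g, none)
  inj' _ _ h := congrArg Prod.fst h
  map_rel_iff' := Iff.rfl

@[simp]
lemma coronaBaseEmbedding_apply (g : V) : coronaBaseEmbedding G H g = (g, none) := rfl

variable {G H}

lemma corona_adj_fst {x y : V × Option W} (h : (corona G H).Adj x y) :
    G.Adj x.1 y.1 ∨ x.1 = y.1 := by
  obtain ⟨a, _ | _⟩ := x <;> obtain ⟨b, _ | _⟩ := y
  exacts [Or.inl h, Or.inr h, Or.inr h, Or.inr h.1]

lemma corona_adj_some_fst {a b : V} {h : W} {o : Option W}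
    (hadj : (corona G H).Adj (a, some h) (b, o)) : a = b := by
  cases o
  exacts [hadj, hadj.1]

lemma edist_fst_le_length_corona {x y : V × Option W} (p : (corona G H).Walk x y) :
    G.edist x.1 y.1 ≤ p.length := by
  induction p with
  | nil => simp
  | @cons x z y hxz p ih =>
    have hxz' : G.edist x.1 z.1 ≤ 1 := edist_le_one_iff_adj_or_eq.mpr (corona_adj_fst hxz)
    calc G.edist x.1 y.1 ≤ G.edist x.1 z.1 + G.edist z.1 y.1 := G.edist_triangle
      _ ≤ 1 + p.length := add_le_add hxz' ih
      _ = (Walk.cons hxz p).length := by rw [Walk.length_cons]; push_cast; ring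

/-- A walk from a pendant vertex to a base vertex must, at some point, leave the copy of `H`
through its root, which costs one step not seen in `G`. -/
lemma edist_fst_add_one_le_length_corona {x y : V × Option W} (p : (corona G H).Walk x y)
    (hx : x.2 ≠ none) (hy : y.2 = none) : G.edist x.1 y.1 + 1 ≤ p.length := by
  induction p with
  | nil => exact absurd hy hx
  | @cons x z y hxz p ih =>
    obtain ⟨a, _ | h⟩ := x
    · exact absurd rfl hx
    obtain rfl : a = z.1 := corona_adj_some_fst hxz
    rw [Walk.length_cons, Nat.cast_add, Nat.cast_one]
    by_cases hz : z.2 = none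
    · exact add_le_add_left (edist_fst_le_length_corona p) 1
    · exact (ih hz hy).trans le_self_add

lemma edist_corona_none_none (a b : V) :
    (corona G H).edist (a, none) (b, none) = G.edist a b :=
  le_antisymm
    (le_iInf fun p => by
      have := edist_le (p.map (coronaBaseEmbedding G H).toHom)
      rwa [Walk.length_map] at this)
    (le_iInf fun p => edist_fst_le_length_corona p)

lemma edist_corona_some_none (a b : V) (h : W) :
    (corona G H).edist (a, some h) (b, none) = G.edist a b + 1 := by
  refine le_antisymm ?_ (le_iInf fun p => edist_fst_add_one_le_length_corona p (by simp) rfl)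
  have hroot : (corona G H).Adj (a, some h) (a, none) := rfl
  calc (corona G H).edist (a, some h) (b, none)
      ≤ (corona G H).edist (a, some h) (a, none) + (corona G H).edist (a, none) (b, none) :=
        (corona G H).edist_triangle
    _ = G.edist a b + 1 := by
        rw [edist_eq_one_iff_adj.mpr hroot, edist_corona_none_none, add_comm]

lemma edgeDist_corona_none (w : V) (e : Sym2 V) :
    edgeDist (corona G H) (w, none) (e.map (coronaBaseEmbedding G H)) = edgeDist G w e := by
  induction e with
  | _ a b => simp [edgeDist, edist_corona_none_none]

lemma edgeDist_corona_some (w : V) (h : W) (e : Sym2 V) :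
    edgeDist (corona G H) (w, some h) (e.map (coronaBaseEmbedding G H)) =
      edgeDist G w e + 1 := by
  induction e with
  | _ a b => simp [edgeDist, edist_corona_some_none, min_add_add_right]

lemma IsEdgeMetricGenerator.image_fst_of_corona {S : Set (V × Option W)}
    (hS : IsEdgeMetricGenerator (corona G H) S) : IsEdgeMetricGenerator G (Prod.fst '' S) := by
  intro e₁ he₁ e₂ he₂ hne
  let ι := coronaBaseEmbedding G H
  obtain ⟨⟨w, o⟩, hwS, hw⟩ := hS (e₁.map ι) ((Embedding.map_mem_edgeSet_iff ι).mpr he₁)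
    (e₂.map ι) ((Embedding.map_mem_edgeSet_iff ι).mpr he₂) ((Sym2.map.injective ι.injective).ne hne)
  refine ⟨w, ⟨_, hwS, rfl⟩, fun hdist => hw ?_⟩
  cases o with
  | none => rw [edgeDist_corona_none, edgeDist_corona_none, hdist]
  | some h => rw [edgeDist_corona_some, edgeDist_corona_some, hdist]

end Corona

theorem edim_le_edim_corona_K1_general {V : Type*} [Fintype V] (G : SimpleGraph V) :
    edim G ≤ edim (corona G (⊥ : SimpleGraph (Fin 1))) := by
  obtain ⟨S, hcard, hS⟩ := exists_isEdgeMetricGenerator_ncard_eq_edim (corona G ⊥)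
  calc edim G ≤ (Prod.fst '' S).ncard := hS.image_fst_of_corona.edim_le_ncard
    _ ≤ S.ncard := Set.ncard_image_le S.toFinite
    _ = _ := hcard

theorem edim_le_edim_corona_K1 {V : Type*} [Fintype V] (G : SimpleGraph V)
    (hG : G.Connected) :
    edim G ≤ edim (corona G (⊥ : SimpleGraph (Fin 1))) :=
  edim_le_edim_corona_K1_general G
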